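/- Suppose the cost process has a cash account: S_t(x,ω) = x⁰ + S̃_t(x̃,ω) and D_t(ω) = ℝ × D̃_t(ω), where x = (x⁰, x̃) ∈ ℝ × ℝ^{J̃}, S̃ is a convex cost process and D̃ a convex portfolio constraint process on the remaining assets J̃. Then the set C of claim processes superhedgeable with zero cost satisfies C = { c ∈ M | there exists an ℝ^{J̃}-valued adapted process x̃=(x̃_t)_{t=0}^T with x̃_T = 0 (convention x̃_{−1}=0) such that almost surely x̃_t ∈ D̃_t for all t and ∑_{t=0}^T S̃_t(x̃_t − x̃_{t−1}) + ∑_{t=0}^T c_t ≤ 0 }. -/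

import Mathlib

/-!
With a cash account, the cash increments `x⁰ₜ - x⁰ₜ₋₁` of a strategy telescope to
`x⁰_T - x⁰₋₁ = 0`, so summing the one-period constraints `Δx⁰ₜ + S̃ₜ(Δx̃ₜ) + cₜ ≤ 0` over `t`
gives the accumulated one. Conversely, given `x̃` with `∑ₜ (S̃ₜ(Δx̃ₜ) + cₜ) ≤ 0`, holding
`x⁰ₜ = -∑_{s ≤ t} (S̃ₛ(Δx̃ₛ) + cₛ)` in cash for `t < T` and `x⁰_T = 0` pays each period's cost
exactly, and the final liquidation leaves the accumulated balance `∑ₜ (S̃ₜ(Δx̃ₜ) + cₜ) ≤ 0` as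
the cost of the last period.
-/

open MeasureTheory Filter

noncomputable section

/-- The portfolio held before time `t`, with the convention `x₋₁ = 0`. -/
def prevP {Ω : Type*} {T : ℕ} {E : Type*} [Zero E]
    (x : Fin (T + 1) → Ω → E) (t : Fin (T + 1)) : Ω → E :=
  if t.1 = 0 then 0 else x ⟨t.1 - 1, lt_of_le_of_lt (Nat.sub_le _ _) t.isLt⟩

/-- The recession cone of a set in a real vector space. -/
def rcone {V : Type*} [AddCommMonoid V] [SMul ℝ V] (A : Set V) : Set V :=
  {y | ∀ a ∈ A, ∀ α : ℝ, 0 < α → a + α • y ∈ A}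

variable {Ω : Type*} {m0 : MeasurableSpace Ω} {T : ℕ} {J : Type*} [Fintype J]

/-- A convex cost process: `S t · ω` is convex, lsc, vanishes at `0`, never `-∞`, and
`S t` is `B(ℝ^J) ⊗ ℱ t`-measurable. -/
structure CostProcess (ℱ : Filtration (Fin (T + 1)) m0) (J : Type*) [Fintype J] where
  S : Fin (T + 1) → (J → ℝ) → Ω → EReal
  ne_bot : ∀ t x ω, S t x ω ≠ ⊥
  convex : ∀ t ω (x y : J → ℝ) (a b : ℝ), 0 ≤ a → 0 ≤ b → a + b = 1 →
    S t (a • x + b • y) ω ≤ (a : EReal) * S t x ω + (b : EReal) * S t y ω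
  lsc : ∀ t ω, LowerSemicontinuous fun x => S t x ω
  zero : ∀ t ω, S t 0 ω = 0
  meas : ∀ t, Measurable[(inferInstance : MeasurableSpace (J → ℝ)).prod (ℱ t)]
    fun p : (J → ℝ) × Ω => S t p.1 p.2

/-- A convex portfolio constraint process: each `D t ω` is closed, convex, contains `0`,
and `ω ↦ D t ω` is `ℱ t`-measurable. -/
structure ConstraintProcess (ℱ : Filtration (Fin (T + 1)) m0) (J : Type*) [Fintype J] where
  D : Fin (T + 1) → Ω → Set (J → ℝ)
  closed : ∀ t ω, IsClosed (D t ω)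
  convex : ∀ t ω, Convex ℝ (D t ω)
  zero_mem : ∀ t ω, (0 : J → ℝ) ∈ D t ω
  meas : ∀ t (U : Set (J → ℝ)), IsOpen U →
    MeasurableSet[ℱ t] {ω | (D t ω ∩ U).Nonempty}

/-- The set `M` of adapted claim processes. -/
def ClaimM (ℱ : Filtration (Fin (T + 1)) m0) : Set (Fin (T + 1) → Ω → ℝ) :=
  {c | Adapted ℱ c}

/-- The set `M₋` of almost surely nonpositive claim processes. -/
def Mminus (P : Measure Ω) (ℱ : Filtration (Fin (T + 1)) m0) :
    Set (Fin (T + 1) → Ω → ℝ) :=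
  {c | c ∈ ClaimM ℱ ∧ ∀ t, ∀ᵐ ω ∂P, c t ω ≤ 0}

/-- The set `C` of claim processes superhedgeable with zero cost. -/
def Cset (P : Measure Ω) (ℱ : Filtration (Fin (T + 1)) m0)
    (S : CostProcess ℱ J) (D : ConstraintProcess ℱ J) :
    Set (Fin (T + 1) → Ω → ℝ) :=
  {c | c ∈ ClaimM ℱ ∧ ∃ x : Fin (T + 1) → Ω → (J → ℝ), Adapted ℱ x ∧
    x (Fin.last T) = 0 ∧
    ∀ᵐ ω ∂P, ∀ t, x t ω ∈ D.D t ω ∧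
      S.S t (x t ω - prevP x t ω) ω + (c t ω : EReal) ≤ 0}

/-- The set of claim processes superhedgeable with zero cost in a market with a cash
account: portfolios are pairs `(x⁰, x̃) ∈ ℝ × ℝ^{J̃}`, the cost is
`Sₜ(x,ω) = x⁰ + S̃ₜ(x̃,ω)` and the constraint is `Dₜ(ω) = ℝ × D̃ₜ(ω)`. -/
def CsetCash (P : Measure Ω) (ℱ : Filtration (Fin (T + 1)) m0)
    (St : CostProcess ℱ J) (Dt : ConstraintProcess ℱ J) :
    Set (Fin (T + 1) → Ω → ℝ) :=
  {c | c ∈ ClaimM ℱ ∧ ∃ x : Fin (T + 1) → Ω → ℝ × (J → ℝ), Adapted ℱ x ∧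
    x (Fin.last T) = 0 ∧
    ∀ᵐ ω ∂P, ∀ t, (x t ω).2 ∈ Dt.D t ω ∧
      (((x t ω).1 - (prevP x t ω).1 : ℝ) : EReal) +
        St.S t ((x t ω).2 - (prevP x t ω).2) ω + (c t ω : EReal) ≤ 0}

section Increments

variable {E F : Type*}

@[simp] lemma prevP_zero [Zero E] (x : Fin (T + 1) → Ω → E) : prevP x 0 = 0 := by
  simp [prevP]

@[simp] lemma prevP_succ [Zero E] (x : Fin (T + 1) → Ω → E) (t : Fin T) :
    prevP x t.succ = x t.castSucc := by
  simp [prevP, Fin.castSucc]; rfl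

lemma prevP_comp [Zero E] [Zero F] {f : E → F} (hf : f 0 = 0) (x : Fin (T + 1) → Ω → E)
    (t : Fin (T + 1)) (ω : Ω) : prevP (fun t ω => f (x t ω)) t ω = f (prevP x t ω) := by
  unfold prevP; split_ifs <;> simp [hf]

lemma sum_sub_prevP [AddCommGroup E] (x : Fin (T + 1) → Ω → E) (ω : Ω) :
    ∑ t, (x t ω - prevP x t ω) = x (Fin.last T) ω := by
  rw [Fin.sum_univ_succ]
  simp only [prevP_zero, prevP_succ, Pi.zero_apply, sub_zero]
  cases T with
  | zero => simp
  | succ n =>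
    rw [← Finset.Iic_top, Fin.sum_Iic_sub ⊤ (fun i => x i ω), add_sub_cancel]
    rfl

lemma prevP_partialSum [AddCommGroup E] (φ : Fin (T + 1) → Ω → E) (t : Fin (T + 1)) (ω : Ω) :
    prevP (fun t ω => ∑ s ∈ Finset.Iic t, φ s ω) t ω = ∑ s ∈ Finset.Iio t, φ s ω := by
  induction t using Fin.cases with
  | zero =>
    rw [prevP_zero,
      Finset.sum_eq_zero fun s hs => absurd (Finset.mem_Iio.mp hs) (Fin.not_lt_zero s)]
    rfl
  | succ i =>
    have hIio : Finset.Iio i.succ = Finset.Iic i.castSucc := by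
      ext s; simp [Fin.le_castSucc_iff]
    simp [hIio]

lemma sub_prevP_partialSum [AddCommGroup E] (φ : Fin (T + 1) → Ω → E) (t : Fin (T + 1))
    (ω : Ω) :
    ∑ s ∈ Finset.Iic t, φ s ω - prevP (fun t ω => ∑ s ∈ Finset.Iic t, φ s ω) t ω = φ t ω := by
  rw [prevP_partialSum, Finset.Iic_eq_cons_Iio, Finset.sum_cons, add_sub_cancel_right]

variable {ℱ : Filtration (Fin (T + 1)) m0}

lemma MeasureTheory.Adapted.measurable_prevP [Zero E] [MeasurableSpace E] {x : Fin (T + 1) → Ω → E}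
    (hx : Adapted ℱ x) (t : Fin (T + 1)) : Measurable[ℱ t] (prevP x t) := by
  unfold prevP
  split_ifs
  · exact measurable_const
  · exact (hx _).mono (ℱ.mono (Fin.mk_le_mk.mpr (Nat.sub_le _ _))) le_rfl

lemma MeasureTheory.Adapted.partialSum [AddCommMonoid E] [MeasurableSpace E] [MeasurableAdd₂ E]
    {φ : Fin (T + 1) → Ω → E} (hφ : Adapted ℱ φ) :
    Adapted ℱ fun t ω => ∑ s ∈ Finset.Iic t, φ s ω := fun _ =>
  Finset.measurable_sum _ fun s hs => (hφ s).mono (ℱ.mono (Finset.mem_Iic.mp hs)) le_rfl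

end Increments

def cashHolding {E : Type*} [AddCommMonoid E] [Neg E] (φ : Fin (T + 1) → Ω → E) :
    Fin (T + 1) → Ω → E :=
  fun t ω => if t = Fin.last T then 0 else -∑ s ∈ Finset.Iic t, φ s ω

section cashHolding

variable {E : Type*} [AddCommGroup E] (φ : Fin (T + 1) → Ω → E)

lemma cashHolding_last : cashHolding φ (Fin.last T) = 0 := by
  funext ω; simp [cashHolding]

lemma prevP_cashHolding (t : Fin (T + 1)) (ω : Ω) :
    prevP (cashHolding φ) t ω = -prevP (fun t ω => ∑ s ∈ Finset.Iic t, φ s ω) t ω := by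
  induction t using Fin.cases with
  | zero => simp
  | succ i => simp [cashHolding, Fin.castSucc_ne_last]

lemma sub_prevP_cashHolding_add (t : Fin (T + 1)) (ω : Ω) :
    cashHolding φ t ω - prevP (cashHolding φ) t ω + φ t ω =
      if t = Fin.last T then ∑ s, φ s ω else 0 := by
  rw [prevP_cashHolding, ← sub_prevP_partialSum φ t ω]
  unfold cashHolding
  split_ifs with ht
  · subst ht
    rw [← Finset.Iic_top]
    abel
  · abel

lemma MeasureTheory.Adapted.cashHolding [MeasurableSpace E] [MeasurableAdd₂ E] [MeasurableNeg E]
    {ℱ : Filtration (Fin (T + 1)) m0} {φ : Fin (T + 1) → Ω → E} (hφ : Adapted ℱ φ) :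
    Adapted ℱ (cashHolding φ) := fun t => by
  unfold _root_.cashHolding
  split_ifs
  · exact measurable_const
  · exact (hφ.partialSum t).neg

end cashHolding

lemma EReal.coe_finset_sum {ι : Type*} (s : Finset ι) (f : ι → ℝ) :
    ((∑ i ∈ s, f i : ℝ) : EReal) = ∑ i ∈ s, (f i : EReal) :=
  map_sum (⟨⟨Real.toEReal, EReal.coe_zero⟩, EReal.coe_add⟩ : ℝ →+ EReal) f s

lemma EReal.sum_ne_bot {ι : Type*} {s : Finset ι} {f : ι → EReal} (h : ∀ i ∈ s, f i ≠ ⊥) :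
    ∑ i ∈ s, f i ≠ ⊥ := fun hbot => by
  obtain ⟨i, hi, hfi⟩ := WithBot.sum_eq_bot_iff.mp hbot
  exact h i hi hfi

lemma EReal.ne_top_of_sum_ne_top {ι : Type*} {s : Finset ι} {f : ι → EReal}
    (hf : ∀ i ∈ s, f i ≠ ⊥) (hsum : ∑ i ∈ s, f i ≠ ⊤) {i : ι} (hi : i ∈ s) : f i ≠ ⊤ := by
  classical
  intro htop
  refine hsum ?_
  rw [← Finset.add_sum_erase _ _ hi, htop]
  exact EReal.top_add_of_ne_bot (EReal.sum_ne_bot fun j hj => hf j (Finset.mem_of_mem_erase hj))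

lemma CostProcess.measurable_apply {ℱ : Filtration (Fin (T + 1)) m0} (S : CostProcess ℱ J)
    (t : Fin (T + 1)) {g : Ω → J → ℝ} (hg : Measurable[ℱ t] g) :
    Measurable[ℱ t] fun ω => S.S t (g ω) ω :=
  (S.meas t).comp (hg.prodMk measurable_id)

def CsetAccumulated (P : Measure Ω) (ℱ : Filtration (Fin (T + 1)) m0)
    (St : CostProcess ℱ J) (Dt : ConstraintProcess ℱ J) : Set (Fin (T + 1) → Ω → ℝ) :=
  {c | c ∈ ClaimM ℱ ∧ ∃ x : Fin (T + 1) → Ω → (J → ℝ), Adapted ℱ x ∧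
    x (Fin.last T) = 0 ∧
    ∀ᵐ ω ∂P, (∀ t, x t ω ∈ Dt.D t ω) ∧
      (∑ t : Fin (T + 1), St.S t (x t ω - prevP x t ω) ω) +
        ((∑ t : Fin (T + 1), c t ω : ℝ) : EReal) ≤ 0}

section CashAccount

variable (P : Measure Ω) (ℱ : Filtration (Fin (T + 1)) m0)
  (St : CostProcess ℱ J) (Dt : ConstraintProcess ℱ J)

lemma CsetCash_subset_CsetAccumulated : CsetCash P ℱ St Dt ⊆ CsetAccumulated P ℱ St Dt := by
  rintro c ⟨hc, x, hx, hxT, hae⟩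
  refine ⟨hc, fun t ω => (x t ω).2, fun t => measurable_snd.comp (hx t),
    funext fun ω => by simp [hxT], ?_⟩
  filter_upwards [hae] with ω hω
  refine ⟨fun t => (hω t).1, ?_⟩
  have hcash : ∑ t, ((x t ω).1 - (prevP x t ω).1) = 0 := by
    simpa [prevP_comp (f := Prod.fst) Prod.fst_zero, hxT] using
      sum_sub_prevP (fun t ω => (x t ω).1) ω
  calc ∑ t, St.S t ((x t ω).2 - prevP (fun t ω => (x t ω).2) t ω) ω + ↑(∑ t, c t ω)
      = ∑ t, ((((x t ω).1 - (prevP x t ω).1 : ℝ) : EReal) +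
          St.S t ((x t ω).2 - (prevP x t ω).2) ω + (c t ω : EReal)) := by
        simp only [prevP_comp (f := Prod.snd) Prod.snd_zero, Finset.sum_add_distrib,
          ← EReal.coe_finset_sum, hcash, EReal.coe_zero, zero_add]
    _ ≤ 0 := Finset.sum_nonpos fun t _ => (hω t).2

lemma CsetAccumulated_subset_CsetCash : CsetAccumulated P ℱ St Dt ⊆ CsetCash P ℱ St Dt := by
  rintro c ⟨hc, x, hx, hxT, hae⟩
  -- `toReal` loses nothing: the accumulated inequality forces every cost to be finite a.s.
  set φ : Fin (T + 1) → Ω → ℝ := fun t ω => (St.S t (x t ω - prevP x t ω) ω).toReal + c t ω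
  have hφ : Adapted ℱ φ := fun t =>
    (St.measurable_apply t ((hx t).sub (hx.measurable_prevP t))).ereal_toReal.add (hc t)
  refine ⟨hc, fun t ω => (cashHolding φ t ω, x t ω), fun t => (hφ.cashHolding t).prodMk (hx t),
    funext fun ω => by simp [cashHolding_last, hxT], ?_⟩
  filter_upwards [hae] with ω ⟨hD, hle⟩
  have hsum : ∑ t, St.S t (x t ω - prevP x t ω) ω ≠ ⊤ := fun htop => by
    rw [htop, EReal.top_add_coe] at hle
    exact EReal.coe_ne_top 0 (top_le_iff.mp hle)
  have hfin : ∀ t, St.S t (x t ω - prevP x t ω) ω ≠ ⊤ := fun t =>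
    EReal.ne_top_of_sum_ne_top (fun t _ => St.ne_bot _ _ _) hsum (Finset.mem_univ t)
  have hφS : ∀ t, (φ t ω : EReal) = St.S t (x t ω - prevP x t ω) ω + c t ω := fun t => by
    rw [EReal.coe_add, EReal.coe_toReal (hfin t) (St.ne_bot _ _ _)]
  have hφsum : ∑ t, φ t ω ≤ 0 := by
    rw [← EReal.coe_nonpos, EReal.coe_finset_sum]
    simpa only [hφS, Finset.sum_add_distrib, EReal.coe_finset_sum] using hle
  intro t
  refine ⟨hD t, ?_⟩
  rw [← prevP_comp (f := Prod.fst) Prod.fst_zero, ← prevP_comp (f := Prod.snd) Prod.snd_zero]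
  dsimp only
  rw [add_assoc, ← hφS, ← EReal.coe_add, EReal.coe_nonpos, sub_prevP_cashHolding_add]
  split_ifs
  exacts [hφsum, le_rfl]

end CashAccount

theorem CsetCash_eq_accumulated_general
    (P : Measure Ω) (ℱ : Filtration (Fin (T + 1)) m0)
    (St : CostProcess ℱ J) (Dt : ConstraintProcess ℱ J) :
    CsetCash P ℱ St Dt =
    {c | c ∈ ClaimM ℱ ∧ ∃ x : Fin (T + 1) → Ω → (J → ℝ), Adapted ℱ x ∧
      x (Fin.last T) = 0 ∧
      ∀ᵐ ω ∂P, (∀ t, x t ω ∈ Dt.D t ω) ∧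
        (∑ t : Fin (T + 1), St.S t (x t ω - prevP x t ω) ω) +
          ((∑ t : Fin (T + 1), c t ω : ℝ) : EReal) ≤ 0} :=
  (CsetCash_subset_CsetAccumulated P ℱ St Dt).antisymm
    (CsetAccumulated_subset_CsetCash P ℱ St Dt)

/-- Example 2: in a market with a cash account, a claim process is
superhedgeable with zero cost iff the accumulated claims can be superhedged by trading in
the risky assets only: `∑ₜ S̃ₜ(Δx̃ₜ) + ∑ₜ cₜ ≤ 0`. -/
theorem CsetCash_eq_accumulated
    (P : Measure Ω) [IsProbabilityMeasure P] (ℱ : Filtration (Fin (T + 1)) m0)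
    (hcomp : ∀ (t : Fin (T + 1)) (s : Set Ω), P s = 0 → MeasurableSet[ℱ t] s)
    (St : CostProcess ℱ J) (Dt : ConstraintProcess ℱ J) :
    CsetCash P ℱ St Dt =
    {c | c ∈ ClaimM ℱ ∧ ∃ x : Fin (T + 1) → Ω → (J → ℝ), Adapted ℱ x ∧
      x (Fin.last T) = 0 ∧
      ∀ᵐ ω ∂P, (∀ t, x t ω ∈ Dt.D t ω) ∧
        (∑ t : Fin (T + 1), St.S t (x t ω - prevP x t ω) ω) +
          ((∑ t : Fin (T + 1), c t ω : ℝ) : EReal) ≤ 0} :=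
  CsetCash_eq_accumulated_general P ℱ St Dt
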